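/- arXiv:0709.3275 — 2 statements merged into one kernel-verified Lean document; each statement's English description precedes it below -/
import Mathlib

section
/- Let q ∈ ℂ with 0 < |q| < 1 and let a, b, c ∈ ℂ∖{0} with c ∉ q^ℤ. Define u(z) = (θ_q(z)/θ_q((q/c)z)) · ₂φ₁(aq/c, bq/c; q²/c; q; z) for z ∈ ℂ∖{0} with |z| < 1 and θ_q((q/c)z) ≠ 0. Then u satisfies the basic hypergeometric equation with parameters (a,b,c): for every z with 0 < |z| < 1, abz ≠ c/q, and θ_q((q/c)z) ≠ 0, one has u(q²z) − (((a+b)z − (1 + c/q))/(abz − c/q))·u(qz) + ((z − 1)/(abz − c/q))·u(z) = 0. -/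
/-- The finite q-Pochhammer symbol `(x; q)_n = ∏_{k=0}^{n-1} (1 - x qᵏ)`. -/
noncomputable def qPoch (q x : ℂ) (n : ℕ) : ℂ :=
  ∏ k ∈ Finset.range n, (1 - x * q ^ k)

/-- The infinite q-Pochhammer symbol `(x; q)_∞ = ∏_{k=0}^{∞} (1 - x qᵏ)`. -/
noncomputable def qPochInf (q x : ℂ) : ℂ :=
  ∏' k : ℕ, (1 - x * q ^ k)

/-- The Jacobi theta function `θ_q(z) = (q;q)_∞ (z;q)_∞ (q/z;q)_∞`. -/
noncomputable def thetaQ (q z : ℂ) : ℂ :=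
  qPochInf q q * qPochInf q z * qPochInf q (q / z)

/-- The basic hypergeometric series `₂φ₁(a,b;c;q;z)`. -/
noncomputable def basicHypergeometric (q a b c z : ℂ) : ℂ :=
  ∑' n : ℕ, qPoch q a n * qPoch q b n / (qPoch q c n * qPoch q q n) * z ^ n

/-!
Since `θ_q(qz) = -z⁻¹ θ_q(z)`, the prefactor `θ_q(z)/θ_q((q/c)z)` of `u` gets multiplied by
`q/c` under `z ↦ qz`. Dividing it out turns the equation for `u` into the basic hypergeometric
equation with parameters `(aq/c, bq/c, q²/c)` for `φ = ₂φ₁(aq/c, bq/c; q²/c; q; z)`. That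
equation, read termwise, is a telescoping sum whose cancellation is the ratio recurrence of the
coefficients of `φ`.
-/

open Filter Topology

theorem HasSum.eq_sub_of_telescoping {E : Type*} [AddCommGroup E] [TopologicalSpace E]
    [IsTopologicalAddGroup E] [T2Space E] {f g : ℕ → E} {a l : E} (hf : HasSum f a)
    (hfg : ∀ n, f n = g (n + 1) - g n) (hg : Tendsto g atTop (𝓝 l)) : a = l - g 0 := by
  refine tendsto_nhds_unique hf.tendsto_sum_nat ?_
  simpa only [hfg, Finset.sum_range_sub] using hg.sub_const (g 0)

section

variable {q : ℂ}

theorem tendsto_one_sub_mul_pow (hq : ‖q‖ < 1) (x : ℂ) :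
    Tendsto (fun n : ℕ ↦ 1 - x * q ^ n) atTop (𝓝 1) := by
  simpa using tendsto_const_nhds.sub ((tendsto_pow_atTop_nhds_zero_of_norm_lt_one hq).const_mul x)

theorem multipliable_one_sub_mul_pow (hq : ‖q‖ < 1) (x : ℂ) :
    Multipliable (fun k : ℕ ↦ 1 - x * q ^ k) := by
  simpa [sub_eq_add_neg] using
    Complex.multipliable_one_add_of_summable ((summable_geometric_of_norm_lt_one hq).mul_left (-x))

theorem qPochInf_eq_one_sub_mul (hq : ‖q‖ < 1) (x : ℂ) :
    qPochInf q x = (1 - x) * qPochInf q (x * q) := by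
  have hshift : (fun k : ℕ ↦ 1 - x * q ^ (k + 1)) = fun k ↦ 1 - x * q * q ^ k := by
    funext k; ring
  unfold qPochInf
  rw [tprod_eq_zero_mul' (hshift ▸ multipliable_one_sub_mul_pow hq _), hshift, pow_zero, mul_one]

theorem thetaQ_mul_left (hq : ‖q‖ < 1) (hq0 : q ≠ 0) {z : ℂ} (hz : z ≠ 0) :
    thetaQ q (q * z) = -z⁻¹ * thetaQ q z := by
  unfold thetaQ
  rw [qPochInf_eq_one_sub_mul hq z, show q / (q * z) = z⁻¹ by field_simp,
    qPochInf_eq_one_sub_mul hq z⁻¹, inv_mul_eq_div, mul_comm z q]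
  field_simp
  ring

theorem thetaQ_mul_left_div_thetaQ (hq : ‖q‖ < 1) (hq0 : q ≠ 0) {ρ z : ℂ} (hρ : ρ ≠ 0)
    (hz : z ≠ 0) :
    thetaQ q (q * z) / thetaQ q (ρ * (q * z)) = ρ * (thetaQ q z / thetaQ q (ρ * z)) := by
  rw [mul_left_comm, thetaQ_mul_left hq hq0 hz, thetaQ_mul_left hq hq0 (mul_ne_zero hρ hz),
    mul_div_mul_comm, neg_div_neg_eq, inv_div_inv, mul_div_cancel_right₀ _ hz]

end

noncomputable def basicHypergeometricCoeff (q a b c : ℂ) (n : ℕ) : ℂ :=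
  qPoch q a n * qPoch q b n / (qPoch q c n * qPoch q q n)

section

variable {q : ℂ} (a b c : ℂ)

theorem basicHypergeometricCoeff_succ (n : ℕ) :
    basicHypergeometricCoeff q a b c (n + 1) = basicHypergeometricCoeff q a b c n *
      ((1 - a * q ^ n) * (1 - b * q ^ n) / ((1 - c * q ^ n) * (1 - q * q ^ n))) := by
  simp only [basicHypergeometricCoeff, qPoch, Finset.prod_range_succ]
  rw [mul_mul_mul_comm, mul_mul_mul_comm (∏ k ∈ Finset.range n, (1 - c * q ^ k)),
    mul_div_mul_comm]

theorem basicHypergeometricCoeff_succ_mul {n : ℕ} (hc : c * q ^ n ≠ 1) (hq : q * q ^ n ≠ 1) :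
    basicHypergeometricCoeff q a b c (n + 1) * ((1 - c * q ^ n) * (1 - q * q ^ n)) =
      basicHypergeometricCoeff q a b c n * ((1 - a * q ^ n) * (1 - b * q ^ n)) := by
  rw [basicHypergeometricCoeff_succ, mul_assoc, div_mul_cancel₀ _
    (mul_ne_zero (sub_ne_zero.2 hc.symm) (sub_ne_zero.2 hq.symm))]

theorem summable_basicHypergeometricCoeff_mul_pow (hq : ‖q‖ < 1) {w : ℂ} (hw : ‖w‖ < 1) :
    Summable (fun n ↦ basicHypergeometricCoeff q a b c n * w ^ n) := by
  set ρ : ℕ → ℂ := fun n ↦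
    (1 - a * q ^ n) * (1 - b * q ^ n) / ((1 - c * q ^ n) * (1 - q * q ^ n))
  have hρ : Tendsto (fun n ↦ ‖ρ n * w‖) atTop (𝓝 ‖w‖) := by
    have h := ((tendsto_one_sub_mul_pow hq a).mul (tendsto_one_sub_mul_pow hq b)).div
      ((tendsto_one_sub_mul_pow hq c).mul (tendsto_one_sub_mul_pow hq q)) (by norm_num)
    simpa only [mul_one, div_one, one_mul, Pi.div_apply] using (h.mul_const w).norm
  obtain ⟨r, hwr, hr1⟩ := exists_between hw
  refine summable_of_ratio_norm_eventually_le hr1 ?_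
  filter_upwards [hρ.eventually_lt_const hwr] with n hn
  calc ‖basicHypergeometricCoeff q a b c (n + 1) * w ^ (n + 1)‖
      = ‖ρ n * w‖ * ‖basicHypergeometricCoeff q a b c n * w ^ n‖ := by
        rw [basicHypergeometricCoeff_succ, ← norm_mul, pow_succ]; congr 1; ring
    _ ≤ r * ‖basicHypergeometricCoeff q a b c n * w ^ n‖ := by gcongr

theorem hasSum_basicHypergeometric (hq : ‖q‖ < 1) {w : ℂ} (hw : ‖w‖ < 1) :
    HasSum (fun n ↦ basicHypergeometricCoeff q a b c n * w ^ n) (basicHypergeometric q a b c w) :=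
  (summable_basicHypergeometricCoeff_mul_pow a b c hq hw).hasSum

theorem basicHypergeometric_qDifference (hq0 : q ≠ 0) (hq : ‖q‖ < 1)
    (hc : ∀ n : ℕ, c * q ^ n ≠ 1) {z : ℂ} (hz : ‖z‖ < 1) :
    (a * b * z - c / q) * basicHypergeometric q a b c (q ^ 2 * z)
      - ((a + b) * z - (1 + c / q)) * basicHypergeometric q a b c (q * z)
      + (z - 1) * basicHypergeometric q a b c z = 0 := by
  set t := basicHypergeometricCoeff q a b c
  have hS {w : ℂ} (hw : ‖w‖ < 1) := hasSum_basicHypergeometric a b c hq hw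
  have hnorm (k : ℕ) : ‖q ^ k * z‖ < 1 := by
    rw [norm_mul, norm_pow]
    exact (mul_le_of_le_one_left (norm_nonneg _) (pow_le_one₀ (norm_nonneg _) hq.le)).trans_lt hz
  have hsum := (((hS (hnorm 2)).mul_left (a * b * z - c / q)).sub
    ((hS (w := q * z) (by simpa only [pow_one] using hnorm 1)).mul_left
      ((a + b) * z - (1 + c / q)))).add ((hS hz).mul_left (z - 1))
  -- By the coefficient recurrence, `G (n + 1) = z (1 - a qⁿ) (1 - b qⁿ) tₙ zⁿ`,
  -- which makes the `n`-th term of the equation equal to `G (n + 1) - G n`.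
  set G : ℕ → ℂ := fun n ↦ (1 - q ^ n) * (1 - c / q * q ^ n) * (t n * z ^ n)
  have hG : Tendsto G atTop (𝓝 0) := by
    simpa only [one_mul, mul_zero] using
      ((tendsto_one_sub_mul_pow hq 1).mul (tendsto_one_sub_mul_pow hq (c / q))).mul
        (hS hz).summable.tendsto_atTop_zero
  have hqn (n : ℕ) : q * q ^ n ≠ 1 := fun h ↦ by
    have := pow_lt_one₀ (norm_nonneg q) hq n.succ_ne_zero
    rw [← norm_pow, pow_succ', h, norm_one] at this
    exact this.false
  refine (hsum.eq_sub_of_telescoping (fun n ↦ ?_) hG).trans (by simp [G])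
  have hrec : t (n + 1) * ((1 - c * q ^ n) * (1 - q * q ^ n)) =
      t n * ((1 - a * q ^ n) * (1 - b * q ^ n)) :=
    basicHypergeometricCoeff_succ_mul a b c (hc n) (hqn n)
  simp only [G, pow_succ', mul_pow]
  field_simp
  linear_combination (-(z ^ n * z * q)) * hrec

theorem basicHypergeometric_shifted_qDifference (hq0 : q ≠ 0) (hq : ‖q‖ < 1) (hc : c ≠ 0)
    (hcq : ∀ n : ℕ, c ≠ q ^ (n + 2)) {z : ℂ} (hz : ‖z‖ < 1) :
    (q / c) ^ 2 * (a * b * z - c / q) *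
        basicHypergeometric q (a * q / c) (b * q / c) (q ^ 2 / c) (q ^ 2 * z)
      - q / c * ((a + b) * z - (1 + c / q)) *
          basicHypergeometric q (a * q / c) (b * q / c) (q ^ 2 / c) (q * z)
      + (z - 1) * basicHypergeometric q (a * q / c) (b * q / c) (q ^ 2 / c) z = 0 := by
  have hc' (n : ℕ) : q ^ 2 / c * q ^ n ≠ 1 := fun h ↦ hcq n <| by
    field_simp at h
    rw [← h, pow_add, mul_comm]
  have hE := basicHypergeometric_qDifference (a * q / c) (b * q / c) (q ^ 2 / c) hq0 hq hc' hz
  set φ := basicHypergeometric q (a * q / c) (b * q / c) (q ^ 2 / c)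
  clear_value φ
  field_simp at hE ⊢
  linear_combination hE

end

theorem second_solution_at_zero_solves_basic_hypergeometric_equation_general
    (q : ℂ) (hq0 : 0 < ‖q‖) (hq1 : ‖q‖ < 1)
    (a b c : ℂ) (hc : c ≠ 0)
    (hcq : ∀ n : ℤ, c ≠ q ^ n)
    (u : ℂ → ℂ)
    (hu : ∀ z, u z = thetaQ q z / thetaQ q (q / c * z)
      * basicHypergeometric q (a * q / c) (b * q / c) (q ^ 2 / c) z)
    (z : ℂ) (hz0 : z ≠ 0) (hz1 : ‖z‖ < 1)
    (hz2 : a * b * z ≠ c / q) :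
    u (q ^ 2 * z) - ((a + b) * z - (1 + c / q)) / (a * b * z - c / q) * u (q * z)
      + (z - 1) / (a * b * z - c / q) * u z = 0 := by
  have hq : q ≠ 0 := norm_pos_iff.1 hq0
  have hφ := basicHypergeometric_shifted_qDifference a b c hq hq1 hc
    (fun n ↦ by exact_mod_cast hcq (n + 2 : ℕ)) hz1
  set φ := basicHypergeometric q (a * q / c) (b * q / c) (q ^ 2 / c)
  have hshift {w : ℂ} (hw : w ≠ 0) := thetaQ_mul_left_div_thetaQ hq1 hq (div_ne_zero hq hc) hw
  set R := thetaQ q z / thetaQ q (q / c * z)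
  have hu0 : u z = R * φ z := hu z
  have hu1 : u (q * z) = q / c * R * φ (q * z) := by rw [hu, hshift hz0]
  have hu2 : u (q ^ 2 * z) = (q / c) ^ 2 * R * φ (q ^ 2 * z) := by
    rw [hu, sq q, mul_assoc q q z, hshift (mul_ne_zero hq hz0), hshift hz0]
    ring
  have hD : a * b * z - c / q ≠ 0 := sub_ne_zero.2 hz2
  rw [hu0, hu1, hu2]
  clear_value φ R
  generalize a * b * z - c / q = D at hD hφ ⊢
  linear_combination (norm := skip) R / D * hφ
  field_simp
  ring

/-- The second solution at `0`,
`u(z) = (θ_q(z)/θ_q((q/c)z)) ₂φ₁(aq/c, bq/c; q²/c; q; z)`,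
of the basic hypergeometric equation with parameters `(a,b,c)` in the non-resonant,
non-logarithmic case `c ∉ q^ℤ`. -/
theorem second_solution_at_zero_solves_basic_hypergeometric_equation
    (q : ℂ) (hq0 : 0 < ‖q‖) (hq1 : ‖q‖ < 1)
    (a b c : ℂ) (ha : a ≠ 0) (hb : b ≠ 0) (hc : c ≠ 0)
    (hcq : ∀ n : ℤ, c ≠ q ^ n)
    (u : ℂ → ℂ)
    (hu : ∀ z, u z = thetaQ q z / thetaQ q (q / c * z)
      * basicHypergeometric q (a * q / c) (b * q / c) (q ^ 2 / c) z)
    (z : ℂ) (hz0 : z ≠ 0) (hz1 : ‖z‖ < 1)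
    (hz2 : a * b * z ≠ c / q) (hz3 : thetaQ q (q / c * z) ≠ 0) :
    u (q ^ 2 * z) - ((a + b) * z - (1 + c / q)) / (a * b * z - c / q) * u (q * z)
      + (z - 1) / (a * b * z - c / q) * u z = 0 :=
  second_solution_at_zero_solves_basic_hypergeometric_equation_general q hq0 hq1 a b c hc hcq u hu z
    hz0 hz1 hz2
end

section
/- Let q ∈ ℂ with 0 < |q| < 1, let a ∈ ℂ∖{0} with a ∉ q^ℤ, let D ∈ ℂ∖{0}, let α ∈ ℝ, and let h(z) = exp(α·Log z) for a fixed branch Log of the logarithm on the slit plane U = ℂ∖[0,∞). Then the function z ↦ D·h(z)·θ_q(az)/θ_q(z) is not identically equal to 1 on the set of z ∈ U where θ_q(z) ≠ 0. -/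
/-- The slit plane `U = ℂ ∖ [0,∞)`. -/
def slitPlane' : Set ℂ := {z : ℂ | ¬ (0 ≤ z.re ∧ z.im = 0)}


/-! Near `z = 1`, which is an isolated point of `q^ℤ` and lies on the boundary of `U`, the
hypothesis gives `D h(z) θ_q(az) = θ_q(z)` on `U`. Since `exp ∘ Log = id` on `U`,
`|h(z)| = |z|^α`, so as `z → 1` within `U` the modulus of the left side tends to
`|D| |θ_q(a)| ≠ 0` (because `a ∉ q^ℤ`), while the right side tends to `θ_q(1) = 0`. -/

open Complex Filter Topology Metric

section QPochhammer

variable {q : ℂ}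

lemma qPochInf_eq_zero {x : ℂ} {k : ℕ} (hx : x * q ^ k = 1) : qPochInf q x = 0 :=
  tprod_of_exists_eq_zero ⟨k, by rw [hx, sub_self]⟩

lemma qPochInf_ne_zero (hq : ‖q‖ < 1) {x : ℂ} (hx : ∀ k : ℕ, x * q ^ k ≠ 1) :
    qPochInf q x ≠ 0 := by
  simp_rw [qPochInf, sub_eq_add_neg]
  refine tprod_one_add_ne_zero_of_summable (fun k => ?_) ?_
  · rw [← sub_eq_add_neg, sub_ne_zero]
    exact (hx k).symm
  · simpa [norm_mul, norm_pow] using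
      (summable_geometric_of_lt_one (norm_nonneg q) hq).mul_left ‖x‖

lemma differentiable_qPochInf (hq : ‖q‖ < 1) : Differentiable ℂ (qPochInf q) := by
  intro x₀
  have hprod : HasProdLocallyUniformlyOn (fun k x => 1 + -(x * q ^ k))
      (fun x => ∏' k, (1 + -(x * q ^ k))) (ball 0 (‖x₀‖ + 1)) := by
    refine ((summable_geometric_of_lt_one (norm_nonneg q) hq).mul_left (‖x₀‖ + 1)
      ).hasProdLocallyUniformlyOn_nat_one_add isOpen_ball (.of_forall fun k x hx => ?_)
      (fun k => by fun_prop)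
    rw [norm_neg, norm_mul, norm_pow]
    exact mul_le_mul_of_nonneg_right (mem_ball_zero_iff.mp hx).le (by positivity)
  have hdiff := hprod.differentiableOn (.of_forall fun s => by fun_prop) isOpen_ball
  simp_rw [← sub_eq_add_neg] at hdiff
  exact hdiff.differentiableAt (isOpen_ball.mem_nhds (by simp))

lemma thetaQ_one : thetaQ q 1 = 0 := by
  rw [thetaQ, qPochInf_eq_zero (x := 1) (k := 0) (by simp), mul_zero, zero_mul]

lemma thetaQ_ne_zero (hq : ‖q‖ < 1) {z : ℂ} (hz : ∀ n : ℤ, z ≠ q ^ n) : thetaQ q z ≠ 0 := by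
  refine mul_ne_zero (mul_ne_zero (qPochInf_ne_zero hq fun k hk => ?_)
    (qPochInf_ne_zero hq fun k hk => ?_)) (qPochInf_ne_zero hq fun k hk => ?_)
  · have : ‖q ^ (k + 1)‖ < 1 := by
      rw [norm_pow]; exact pow_lt_one₀ (norm_nonneg q) hq k.succ_ne_zero
    rw [pow_succ', hk, norm_one] at this
    exact this.false
  · refine hz (-k) ?_
    rw [zpow_neg, zpow_natCast]
    exact eq_inv_of_mul_eq_one_left hk
  · have hz0 : z ≠ 0 := by rintro rfl; simp at hk
    refine hz (k + 1) ?_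
    rw [div_mul_eq_mul_div, div_eq_one_iff_eq hz0] at hk
    rw [← hk, ← pow_succ']
    norm_cast

lemma differentiableAt_thetaQ (hq : ‖q‖ < 1) {z : ℂ} (hz : z ≠ 0) :
    DifferentiableAt ℂ (thetaQ q) z := by
  have := differentiable_qPochInf hq
  unfold thetaQ
  fun_prop (disch := assumption)

lemma eventually_ne_zpow_nhdsNE_one (hq0 : 0 < ‖q‖) (hq1 : ‖q‖ < 1) :
    ∀ᶠ z in 𝓝[≠] (1 : ℂ), ∀ n : ℤ, z ≠ q ^ n := by
  have hopen : IsOpen {z : ℂ | ‖q‖ < ‖z‖ ∧ ‖z‖ < ‖q‖⁻¹} :=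
    (isOpen_lt continuous_const continuous_norm).inter (isOpen_lt continuous_norm continuous_const)
  have hone : ‖q‖ < ‖(1 : ℂ)‖ ∧ ‖(1 : ℂ)‖ < ‖q‖⁻¹ := by
    simpa using ⟨hq1, (one_lt_inv₀ hq0).mpr hq1⟩
  filter_upwards [nhdsWithin_le_nhds (hopen.mem_nhds hone), self_mem_nhdsWithin]
    with z ⟨hlow, hupp⟩ hz1 n rfl
  rw [norm_zpow] at hlow hupp
  have : n = 0 := by
    have hn1 := (zpow_lt_zpow_iff_right_of_lt_one₀ hq0 hq1 (m := 1)).mp (by simpa using hlow)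
    have hn2 := (zpow_lt_zpow_iff_right_of_lt_one₀ hq0 hq1 (n := -1)).mp (by simpa using hupp)
    omega
  simp [this] at hz1

end QPochhammer

lemma norm_cexp_ofReal_mul (α : ℝ) (w : ℂ) : ‖cexp (α * w)‖ = ‖cexp w‖ ^ α := by
  rw [norm_exp, norm_exp, ← Real.exp_mul, re_ofReal_mul, mul_comm]

lemma one_mem_closure_slitPlane' : (1 : ℂ) ∈ closure slitPlane' := by
  have hcont : Continuous fun t : ℝ => 1 + t * I := by fun_prop
  have hpath : Tendsto (fun t : ℝ => 1 + t * I) (𝓝[≠] 0) (𝓝 1) := by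
    simpa using (hcont.tendsto 0).mono_left nhdsWithin_le_nhds
  refine mem_closure_of_tendsto hpath (eventually_nhdsWithin_of_forall fun t ht h => ?_)
  simp_all

theorem thetaQ_twisted_ratio_not_identically_one_general
    (q : ℂ) (hq0 : 0 < ‖q‖) (hq1 : ‖q‖ < 1)
    (a : ℂ) (ha : a ≠ 0) (haq : ∀ n : ℤ, a ≠ q ^ n)
    (D : ℂ) (hD : D ≠ 0) (α : ℝ)
    (Log : ℂ → ℂ) (hLog : ∀ z ∈ slitPlane', Complex.exp (Log z) = z)
    (h : ℂ → ℂ) (hh : ∀ z, h z = Complex.exp ((α : ℂ) * Log z)) :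
    ¬ (∀ z ∈ slitPlane', thetaQ q z ≠ 0 →
        D * h z * thetaQ q (a * z) / thetaQ q z = 1) := by
  intro H
  let l := 𝓝[slitPlane'] (1 : ℂ)
  have : l.NeBot := mem_closure_iff_nhdsWithin_neBot.mp one_mem_closure_slitPlane'
  have hl : l ≤ 𝓝[≠] 1 := nhdsWithin_mono _ fun z hz (h1 : z = 1) => hz (by simp [h1])
  have hnorm : ∀ᶠ z in l, ‖D‖ * ‖z‖ ^ α * ‖thetaQ q (a * z)‖ = ‖thetaQ q z‖ := by
    filter_upwards [self_mem_nhdsWithin, hl (eventually_ne_zpow_nhdsNE_one hq0 hq1)]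
      with z hzU hzq
    have hθ := thetaQ_ne_zero hq1 hzq
    rw [← (div_eq_one_iff_eq hθ).mp (H z hzU hθ), norm_mul, norm_mul, hh,
      norm_cexp_ofReal_mul, hLog z hzU]
  have hlhs : ContinuousAt (fun z => ‖D‖ * ‖z‖ ^ α * ‖thetaQ q (a * z)‖) 1 := by
    have hθ := (differentiableAt_thetaQ hq1 (z := a * 1) (by simpa)).continuousAt
    exact (continuousAt_const.mul (continuous_norm.continuousAt.rpow_const (.inl (by simp)))).mul
      (hθ.comp (by fun_prop)).norm
  have hrhs : Tendsto (fun z => ‖thetaQ q z‖) l (𝓝 0) := by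
    simpa [thetaQ_one] using ((differentiableAt_thetaQ hq1 one_ne_zero).continuousAt.norm.tendsto
      |>.mono_left nhdsWithin_le_nhds)
  have := tendsto_nhds_unique ((hlhs.tendsto.mono_left nhdsWithin_le_nhds).congr' hnorm) hrhs
  simp [hD, thetaQ_ne_zero hq1 haq] at this

/-- For `a ∉ q^ℤ`, the function `z ↦ D z^α θ_q(az)/θ_q(z)` is not identically `1`
on the set of `z` in the slit plane where `θ_q(z) ≠ 0`. -/
theorem thetaQ_twisted_ratio_not_identically_one
    (q : ℂ) (hq0 : 0 < ‖q‖) (hq1 : ‖q‖ < 1)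
    (a : ℂ) (ha : a ≠ 0) (haq : ∀ n : ℤ, a ≠ q ^ n)
    (D : ℂ) (hD : D ≠ 0) (α : ℝ)
    (Log : ℂ → ℂ) (hLog : ∀ z ∈ slitPlane', Complex.exp (Log z) = z)
    (hLogHolo : DifferentiableOn ℂ Log slitPlane')
    (h : ℂ → ℂ) (hh : ∀ z, h z = Complex.exp ((α : ℂ) * Log z)) :
    ¬ (∀ z ∈ slitPlane', thetaQ q z ≠ 0 →
        D * h z * thetaQ q (a * z) / thetaQ q z = 1) :=
  thetaQ_twisted_ratio_not_identically_one_general q hq0 hq1 a ha haq D hD α Log hLog h hh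
end
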